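/- arXiv:1905.01650 — 2 statements merged into one kernel-verified Lean document; each statement's English description precedes it below -/
import Mathlib

section
/- Every 2×2 complex matrix A with determinant 1 and trace -2 is a product of two exponentials of trace-zero matrices: there exist 2×2 matrices B, C with tr(B) = tr(C) = 0 and A = exp(B)·exp(C). -/
/-!
By Cayley–Hamilton, `N := -(A + 1)` squares to zero, so `exp N = 1 + N = -A`.
Since `-1 = exp (diagonal (π i, -π i))`, we get `A = exp (diagonal (π i, -π i)) * exp N`
with both exponents traceless.
-/

attribute [local instance] Matrix.linftyOpNormedRing Matrix.linftyOpNormedAlgebra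

open NormedSpace Matrix

section NilpotentExp

variable {𝔸 : Type*} [Ring 𝔸] [Algebra ℚ 𝔸] [TopologicalSpace 𝔸] [IsTopologicalRing 𝔸]

theorem NormedSpace.exp_eq_sum_range_of_pow_eq_zero {x : 𝔸} {k : ℕ} (hx : x ^ k = 0) :
    exp x = ∑ n ∈ Finset.range k, (n.factorial⁻¹ : ℚ) • x ^ n := by
  rw [exp_eq_tsum_rat]
  refine tsum_eq_sum fun n hn => ?_
  rw [pow_eq_zero_of_le (by simpa using hn) hx, smul_zero]

theorem NormedSpace.exp_eq_one_add_of_sq_eq_zero {x : 𝔸} (hx : x ^ 2 = 0) :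
    exp x = 1 + x := by
  simp [exp_eq_sum_range_of_pow_eq_zero hx, Finset.sum_range_succ]

end NilpotentExp

theorem Matrix.sq_sub_algebraMap_eq_zero {R : Type*} [CommRing R] [Nontrivial R]
    (A : Matrix (Fin 2) (Fin 2) R) (a : R) (htr : A.trace = 2 * a) (hdet : A.det = a ^ 2) :
    (A - algebraMap R _ a) ^ 2 = 0 := by
  have hCH := A.aeval_self_charpoly
  rw [charpoly_fin_two, htr, hdet] at hCH
  simp only [map_add, map_sub, map_mul, map_pow, map_ofNat, Polynomial.aeval_X,
    Polynomial.aeval_C] at hCH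
  rwa [(Algebra.commute_algebraMap_right a A).sub_sq, mul_assoc, ← Algebra.commutes,
    ← mul_assoc]

theorem Matrix.exp_diagonal_pi_mul_I :
    exp (diagonal ![(Real.pi : ℂ) * Complex.I, -(Real.pi * Complex.I)]) = -1 := by
  rw [exp_diagonal, ← diagonal_one, diagonal_neg]
  congr 1
  ext i
  fin_cases i <;> simp [← Complex.exp_eq_exp_ℂ, Complex.exp_neg, Complex.exp_pi_mul_I]

theorem trace_neg_two_two_exponentials (A : Matrix (Fin 2) (Fin 2) ℂ)
    (hdet : A.det = 1) (htr : A.trace = -2) :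
    ∃ B C : Matrix (Fin 2) (Fin 2) ℂ, B.trace = 0 ∧ C.trace = 0 ∧
      A = NormedSpace.exp B * NormedSpace.exp C := by
  have hsq : (A + 1) ^ 2 = 0 := by
    simpa using A.sq_sub_algebraMap_eq_zero (-1) (by rw [htr]; norm_num) (by rw [hdet]; norm_num)
  refine ⟨diagonal ![(Real.pi : ℂ) * Complex.I, -(Real.pi * Complex.I)], -(A + 1),
    by simp, by simp [htr], ?_⟩
  rw [exp_diagonal_pi_mul_I, exp_eq_one_add_of_sq_eq_zero (by rwa [neg_sq])]
  noncomm_ring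
end

section
/- Fix complex numbers a, b, c, d with ad - bc = 1, c ≠ 0, and D := (a+d)² - 4 ≠ 0. Fix a square root √D of D. Then the map (u,v,w) ↦ u + ((d-a+√D)/(2c))·v is a bijection from the set {(u,v,w) ∈ ℂ³ : (a-d)u + bv + cw = 0, u² + vw = -1} onto ℂ \ {0}. -/
/-!
On the plane `(a - d) u + b v + c w = 0` the quadric `u² + v w = -1` factors as
`(u + λ v)(u + μ v) = -1`, where `λ, μ = (d - a ± √D) / (2c)` are the roots of
`c t² + (a - d) t - b`. Since `λ ≠ μ`, the coordinates `x = u + λ v`, `y = u + μ v` identify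
the conic with the hyperbola `x y = -1`, which projects bijectively onto `x ≠ 0`.
-/

section

variable {K : Type*} [Field K]

theorem bijOn_fst_hyperbola {k : K} (hk : k ≠ 0) :
    Set.BijOn Prod.fst {q : K × K | q.1 * q.2 = k} {x | x ≠ 0} := by
  refine ⟨?_, ?_, ?_⟩
  · rintro ⟨x, y⟩ (h : x * y = k) rfl
    exact hk (by simp [← h])
  · rintro ⟨x₁, y₁⟩ (h₁ : x₁ * y₁ = k) ⟨x₂, y₂⟩ (h₂ : x₂ * y₂ = k) (rfl : x₁ = x₂)
    have hx : x₁ ≠ 0 := left_ne_zero_of_mul (h₁ ▸ hk)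
    rw [mul_left_cancel₀ hx (h₁.trans h₂.symm)]
  · intro x (hx : x ≠ 0)
    exact ⟨(x, k / x), mul_div_cancel₀ k hx, rfl⟩

variable {e b c l m : K}

theorem sq_add_mul_eq_mul_of_mem_plane (hc : c ≠ 0) (hsum : c * (l + m) = -e)
    (hprod : c * (l * m) = -b) {u v w : K} (hplane : e * u + b * v + c * w = 0) :
    u ^ 2 + v * w = (u + l * v) * (u + m * v) :=
  mul_left_cancel₀ hc <| by linear_combination v * hplane - u * v * hsum - v ^ 2 * hprod

theorem bijOn_plane_quadric_hyperbola (hc : c ≠ 0) (hlm : l ≠ m) (hsum : c * (l + m) = -e)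
    (hprod : c * (l * m) = -b) :
    Set.BijOn (fun p : K × K × K => (p.1 + l * p.2.1, p.1 + m * p.2.1))
      {p | e * p.1 + b * p.2.1 + c * p.2.2 = 0 ∧ p.1 ^ 2 + p.2.1 * p.2.2 = -1}
      {q | q.1 * q.2 = -1} := by
  have hlm' : l - m ≠ 0 := sub_ne_zero.mpr hlm
  refine ⟨?_, ?_, ?_⟩
  · rintro ⟨u, v, w⟩ ⟨hplane, hquad⟩
    exact (sq_add_mul_eq_mul_of_mem_plane hc hsum hprod hplane).symm.trans hquad
  · rintro ⟨u₁, v₁, w₁⟩ ⟨h₁, -⟩ ⟨u₂, v₂, w₂⟩ ⟨h₂, -⟩ h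
    obtain ⟨hl, hm⟩ := Prod.mk.inj h
    have hv : v₁ = v₂ := mul_left_cancel₀ hlm' (by linear_combination hl - hm)
    have hu : u₁ = u₂ := by linear_combination hl - l * hv
    have hw : w₁ = w₂ := mul_left_cancel₀ hc (by linear_combination h₁ - h₂ - e * hu - b * hv)
    rw [hu, hv, hw]
  · rintro ⟨x, y⟩ (hxy : x * y = -1)
    obtain ⟨v, hv⟩ : ∃ v, (l - m) * v = x - y := ⟨_, mul_div_cancel₀ _ hlm'⟩
    have hplane : e * (x - l * v) + b * v + c * (-(e * (x - l * v) + b * v) / c) = 0 := by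
      rw [mul_div_cancel₀ _ hc]; ring
    refine ⟨(x - l * v, v, -(e * (x - l * v) + b * v) / c), ⟨hplane, ?_⟩, ?_⟩
    · rw [sq_add_mul_eq_mul_of_mem_plane hc hsum hprod hplane]
      linear_combination hxy - x * hv
    · refine Prod.ext ?_ ?_
      · ring
      · linear_combination -hv

end

theorem fiber_bijection (a b c d s : ℂ) (hdet : a * d - b * c = 1) (hc : c ≠ 0)
    (hD : (a + d) ^ 2 - 4 ≠ 0) (hs : s ^ 2 = (a + d) ^ 2 - 4) :
    Set.BijOn (fun p : ℂ × ℂ × ℂ => p.1 + ((d - a + s) / (2 * c)) * p.2.1)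
      {p : ℂ × ℂ × ℂ | (a - d) * p.1 + b * p.2.1 + c * p.2.2 = 0 ∧
        p.1 ^ 2 + p.2.1 * p.2.2 = -1}
      {z : ℂ | z ≠ 0} := by
  have h2c : 2 * c ≠ 0 := mul_ne_zero two_ne_zero hc
  have hs0 : s ≠ 0 := by rintro rfl; exact hD (by rw [← hs]; ring)
  set l := (d - a + s) / (2 * c) with hl
  set m := (d - a - s) / (2 * c) with hm
  have hlm : l ≠ m := by
    rw [hl, hm, Ne, div_left_inj' h2c]
    exact fun h => hs0 (by linear_combination h / 2)
  have hsum : c * (l + m) = -(a - d) := by rw [hl, hm]; field_simp; ring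
  have hprod : c * (l * m) = -b := by
    rw [hl, hm]
    field_simp
    linear_combination -hs - 4 * hdet
  exact (bijOn_fst_hyperbola (neg_ne_zero.mpr one_ne_zero)).comp
    (bijOn_plane_quadric_hyperbola hc hlm hsum hprod)
end
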